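/- Let Ω ∈ (0, π] and let x ∈ ℓ²(ℤ; ℂ). Then for every integer k the series c_k = (Ω/π) · Σ_{t∈ℤ} sinc(kπ + Ωt) · x(t) converges absolutely, and Σ_{k∈ℤ} |c_k|² ≤ (Ω/π) · Σ_{t∈ℤ} |x(t)|². In particular the map x ↦ (c_k)_{k∈ℤ} is a bounded linear operator from ℓ²(ℤ) to ℓ²(ℤ). -/

import Mathlib

/-!
For `s > 0` let `e(s, a) ∈ L²(ℝ)` be `ξ ↦ exp (i a ξ)` cut off to the band `(-s, s]` and scaled
by `(2s)^(-1/2)`; up to the Fourier transform it is a shifted sinc. For `s ≤ s'`,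
`⟪e(s, a), e(s', b)⟫ = √(s/s') sinc ((b - a) s)`, so `(e(π, t))_{t ∈ ℤ}` and
`(e(Ω, -kπ/Ω))_{k ∈ ℤ}` are orthonormal families whose Gram matrix is `√(Ω/π) sinc (kπ + Ωt)`.
The Gram matrix of two orthonormal families is a contraction on `ℓ²`: expand `x` in the first
family and apply Bessel's inequality in the second. Each row is square summable by Bessel's
inequality, hence absolutely summable against `x ∈ ℓ²`.
-/

noncomputable def sinc (x : ℝ) : ℝ := if x = 0 then 1 else Real.sin x / x

open MeasureTheory Set Complex ComplexConjugate
open scoped InnerProductSpace Real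

theorem sinc_eq_real_sinc : sinc = Real.sinc := rfl

section Orthonormal

variable {𝕜 E ι κ : Type*} [RCLike 𝕜] [NormedAddCommGroup E] [InnerProductSpace 𝕜 E]
  {u : ι → E} {x : ι → 𝕜}

theorem Orthonormal.summable_norm_inner_mul (hu : Orthonormal 𝕜 u) (v : E)
    (hx : Summable fun t => ‖x t‖ ^ 2) : Summable fun t => ‖⟪v, u t⟫_𝕜 * x t‖ := by
  have hbessel : Summable fun t => ‖⟪v, u t⟫_𝕜‖ ^ 2 := by
    simpa only [norm_inner_symm] using hu.inner_products_summable v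
  refine .of_nonneg_of_le (fun t => norm_nonneg _) (fun t => ?_) ((hbessel.add hx).div_const 2)
  rw [norm_mul, le_div_iff₀ two_pos, mul_comm, ← mul_assoc]
  exact two_mul_le_add_sq _ _

theorem Orthonormal.exists_hasSum_smul [CompleteSpace E] (hu : Orthonormal 𝕜 u)
    (hx : Summable fun t => ‖x t‖ ^ 2) :
    ∃ f : E, HasSum (fun t => x t • u t) f ∧ ‖f‖ ^ 2 = ∑' t, ‖x t‖ ^ 2 := by
  have hx' : Memℓp x 2 := memℓp_gen (by simpa using hx)
  refine ⟨hu.orthogonalFamily.linearIsometry ⟨x, hx'⟩, ?_, ?_⟩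
  · simpa using hu.orthogonalFamily.hasSum_linearIsometry ⟨x, hx'⟩
  · rw [LinearIsometry.norm_map]
    simpa using lp.norm_rpow_eq_tsum (p := 2) (by norm_num) ⟨x, hx'⟩

theorem Orthonormal.summable_and_tsum_norm_tsum_inner_mul_sq_le [CompleteSpace E]
    {v : κ → E} (hv : Orthonormal 𝕜 v) (hu : Orthonormal 𝕜 u)
    (hx : Summable fun t => ‖x t‖ ^ 2) :
    (Summable fun k => ‖∑' t, ⟪v k, u t⟫_𝕜 * x t‖ ^ 2) ∧
      ∑' k, ‖∑' t, ⟪v k, u t⟫_𝕜 * x t‖ ^ 2 ≤ ∑' t, ‖x t‖ ^ 2 := by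
  obtain ⟨f, hf, hfnorm⟩ := hu.exists_hasSum_smul hx
  have hcoeff : ∀ k, ∑' t, ⟪v k, u t⟫_𝕜 * x t = ⟪v k, f⟫_𝕜 := fun k => by
    simpa [inner_smul_right, mul_comm] using ((innerSL 𝕜 (v k)).hasSum hf).tsum_eq
  simp only [hcoeff, ← hfnorm]
  exact ⟨hv.inner_products_summable f, hv.tsum_inner_products_le f⟩

end Orthonormal

theorem Real.sinc_int_mul_pi (n : ℤ) : Real.sinc (n * π) = if n = 0 then 1 else 0 := by
  split_ifs with hn
  · simp [hn]
  · rw [Real.sinc_of_ne_zero (by simp [hn, Real.pi_ne_zero]), Real.sin_int_mul_pi, zero_div]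

noncomputable section

def bandExp (s a : ℝ) : ℝ → ℂ := (Ioc (-s) s).indicator fun ξ => exp (↑(a * ξ) * I)

theorem memLp_bandExp (s a : ℝ) : MemLp (bandExp s a) 2 := by
  rw [bandExp, memLp_indicator_iff_restrict measurableSet_Ioc]
  exact .of_bound (by fun_prop) 1 (.of_forall fun ξ => (norm_exp_ofReal_mul_I _).le)

theorem integral_bandExp {s : ℝ} (hs : 0 < s) (a : ℝ) :
    ∫ ξ, bandExp s a ξ = 2 * s * Real.sinc (a * s) := by
  rw [bandExp, integral_indicator measurableSet_Ioc,
    ← intervalIntegral.integral_of_le (by linarith)]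
  -- `t ↦ exp (i a t)` is the characteristic function of the Dirac mass at `a`.
  simpa [charFun_dirac, mul_comm] using integral_charFun_Icc (μ := Measure.dirac a) hs

theorem conj_bandExp_mul_bandExp {s s' : ℝ} (hss' : s ≤ s') (a b ξ : ℝ) :
    conj (bandExp s a ξ) * bandExp s' b ξ = bandExp s (b - a) ξ := by
  by_cases hξ : ξ ∈ Ioc (-s) s
  · have hξ' : ξ ∈ Ioc (-s') s' := ⟨by linarith [hξ.1], hξ.2.trans hss'⟩
    simp only [bandExp, indicator_of_mem hξ, indicator_of_mem hξ', ← exp_conj,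
      ← Complex.exp_add, map_mul, conj_ofReal, conj_I]
    push_cast
    ring_nf
  · simp [bandExp, indicator_of_notMem hξ]

def bandExpLp (s a : ℝ) : Lp ℂ 2 (volume : Measure ℝ) :=
  ((√(2 * s))⁻¹ : ℂ) • (memLp_bandExp s a).toLp

theorem inner_bandExpLp {s s' : ℝ} (hs : 0 < s) (hss' : s ≤ s') (a b : ℝ) :
    ⟪bandExpLp s a, bandExpLp s' b⟫_ℂ = √(s / s') * Real.sinc ((b - a) * s) := by
  have hinner : ⟪(memLp_bandExp s a).toLp, (memLp_bandExp s' b).toLp⟫_ℂ =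
      2 * s * Real.sinc ((b - a) * s) := by
    rw [L2.inner_def, ← integral_bandExp hs]
    refine integral_congr_ae ?_
    filter_upwards [(memLp_bandExp s a).coeFn_toLp, (memLp_bandExp s' b).coeFn_toLp]
      with ξ ha hb
    rw [ha, hb, RCLike.inner_apply, mul_comm, conj_bandExp_mul_bandExp hss']
  have hscale : (√(2 * s))⁻¹ * (√(2 * s'))⁻¹ * (2 * s) = √(s / s') := by
    rw [← mul_div_mul_left s s' two_ne_zero, Real.sqrt_div (by positivity)]
    field_simp
    rw [Real.sq_sqrt (by positivity)]
  rw [bandExpLp, bandExpLp, inner_smul_left, inner_smul_right, hinner, conj_inv, conj_ofReal,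
    ← hscale]
  push_cast
  ring

theorem orthonormal_bandExpLp {s : ℝ} (hs : 0 < s) :
    Orthonormal ℂ fun n : ℤ => bandExpLp s (n * π / s) := by
  refine orthonormal_iff_ite.mpr fun m n => ?_
  have harg : ((n : ℝ) * π / s - m * π / s) * s = ((n - m : ℤ) : ℝ) * π := by
    push_cast
    field_simp
  rw [inner_bandExpLp hs le_rfl, div_self hs.ne', Real.sqrt_one, ofReal_one, one_mul, harg,
    Real.sinc_int_mul_pi]
  by_cases h : m = n <;> simp [h, sub_eq_zero, Ne.symm]

theorem inner_bandExpLp_int_mul_pi_div {s : ℝ} (hs : 0 < s) (hsπ : s ≤ π) (k t : ℤ) :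
    ⟪bandExpLp s ((-k : ℤ) * π / s), bandExpLp π (t * π / π)⟫_ℂ =
      √(s / π) * Real.sinc (k * π + s * t) := by
  have harg : ((t : ℝ) * π / π - ((-k : ℤ) : ℝ) * π / s) * s = k * π + s * t := by
    push_cast
    field_simp
    ring
  rw [inner_bandExpLp hs hsπ, harg]

end

/-- The sinc-convolution sampling operator `Q*` maps `ℓ²(ℤ)` boundedly into `ℓ²(ℤ)`:
for `x ∈ ℓ²(ℤ)`, each series `c_k = (Ω/π) ∑_{t∈ℤ} sinc(kπ + Ωt) x(t)` converges
absolutely, and `∑_{k∈ℤ} |c_k|² ≤ (Ω/π) ∑_{t∈ℤ} |x(t)|²`. -/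
theorem sinc_convolution_bounded_on_l2
    (Ω : ℝ) (hΩ : Ω ∈ Set.Ioc 0 Real.pi) (x : ℤ → ℂ)
    (hx : Summable fun t : ℤ => norm (x t) ^ 2) :
    (∀ k : ℤ, Summable fun t : ℤ =>
      norm (((sinc ((k : ℝ) * Real.pi + Ω * t)) : ℂ) * x t)) ∧
    Summable (fun k : ℤ =>
      norm (((Ω / Real.pi : ℝ) : ℂ) *
        ∑' t : ℤ, ((sinc ((k : ℝ) * Real.pi + Ω * t)) : ℂ) * x t) ^ 2) ∧
    ∑' k : ℤ, norm (((Ω / Real.pi : ℝ) : ℂ) *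
        ∑' t : ℤ, ((sinc ((k : ℝ) * Real.pi + Ω * t)) : ℂ) * x t) ^ 2 ≤
      (Ω / Real.pi) * ∑' t : ℤ, norm (x t) ^ 2 := by
  obtain ⟨hΩ0, hΩπ⟩ := hΩ
  set u : ℤ → Lp ℂ 2 (volume : Measure ℝ) := fun t => bandExpLp π (t * π / π)
  set v : ℤ → Lp ℂ 2 (volume : Measure ℝ) := fun k => bandExpLp Ω ((-k : ℤ) * π / Ω)
  have hu : Orthonormal ℂ u := orthonormal_bandExpLp Real.pi_pos
  have hv : Orthonormal ℂ v := (orthonormal_bandExpLp hΩ0).comp _ neg_injective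
  set r := √(Ω / π)
  have hr : 0 < r := by positivity
  have hr2 : r ^ 2 = Ω / π := Real.sq_sqrt (by positivity)
  have hsinc : ∀ k t : ℤ, (sinc (k * π + Ω * t) : ℂ) = (r : ℂ)⁻¹ * ⟪v k, u t⟫_ℂ := by
    intro k t
    rw [inner_bandExpLp_int_mul_pi_div hΩ0 hΩπ, ← mul_assoc,
      inv_mul_cancel₀ (ofReal_ne_zero.mpr hr.ne'), one_mul, sinc_eq_real_sinc]
  have hcoeff : ∀ k : ℤ,
      ‖((Ω / π : ℝ) : ℂ) * ∑' t : ℤ, (sinc (k * π + Ω * t) : ℂ) * x t‖ ^ 2 =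
        Ω / π * ‖∑' t : ℤ, ⟪v k, u t⟫_ℂ * x t‖ ^ 2 := by
    intro k
    simp only [hsinc, mul_assoc, tsum_mul_left, norm_mul, norm_inv, norm_real,
      Real.norm_of_nonneg hr.le, Real.norm_of_nonneg (by positivity : 0 ≤ Ω / π)]
    rw [← hr2]
    field_simp
  obtain ⟨hsum, hle⟩ := hv.summable_and_tsum_norm_tsum_inner_mul_sq_le hu hx
  refine ⟨fun k => ?_, ?_, ?_⟩
  · simpa [hsinc, mul_assoc, abs_of_pos hr] using
      (hu.summable_norm_inner_mul (v k) hx).mul_left r⁻¹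
  · simpa only [hcoeff] using hsum.mul_left (Ω / π)
  · simp only [hcoeff, tsum_mul_left]
    exact mul_le_mul_of_nonneg_left hle (by positivity)
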